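/- Let M(n,A,l) denote the number of Motzkin paths of width n, area A, and last fall length l, with the convention that M(n,A,l) = 0 whenever n < 0, A < 0, l < 0 or A > n², and base case M(0,0,0) = 1. Then for all n ≥ 1, all A ≥ 0 and all l ≥ 0, the recurrence M(n,A,l) = Σ_{l' ≥ l} M(n−1, A−l, l') + Σ_{l' ≥ l−1} M(n−2, A−(2l−1), l') holds (where the second sum is absent, i.e. zero, when l = 0, since then A−(2l−1) would require area increase; equivalently, terms with a negative argument are zero). -/

import Mathlib

/-- Moves of a Motzkin path: Up-right, Horizontal-right, Down-right. -/
inductive Move : Type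
  | U : Move
  | H : Move
  | D : Move
deriving DecidableEq

open Move

/-- The vertical step of a move. -/
def Move.step : Move → ℤ
  | U => 1
  | H => 0
  | D => -1

/-- The height of a path after its first `i` moves. -/
def heightAt (mz : List Move) (i : ℕ) : ℤ :=
  ((mz.take i).map Move.step).sum

/-- A word over {U,H,D} is a Motzkin path if it never goes below the x-axis
and ends on the x-axis. -/
def IsMotzkin (mz : List Move) : Prop :=
  (∀ i, 0 ≤ heightAt mz i) ∧ heightAt mz mz.length = 0

/-- The area between the x-axis and the path (sum of heights at integer points). -/
def area (mz : List Move) : ℤ :=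
  ∑ i ∈ Finset.range (mz.length + 1), heightAt mz i

/-- `MZ n A` is the set of Motzkin paths of width `n` and area `A`. -/
def MZ (n A : ℕ) : Set (List Move) :=
  {mz | mz.length = n ∧ IsMotzkin mz ∧ area mz = A}

/-- The weight `ω_i` of the `i`-th move (0-indexed): it is `h_i` for U and D moves
(height after the move for U, before the move for D) and `2h_i + 1` for H moves. -/
def moveWeight (mz : List Move) (i : ℕ) : ℤ :=
  match mz[i]? with
  | some U => heightAt mz (i + 1)
  | some D => heightAt mz i
  | some H => 2 * heightAt mz i + 1
  | none => 1

/-- The weight `ω(mz)` of a Motzkin path. -/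
def weight (mz : List Move) : ℤ :=
  ∏ i ∈ Finset.range mz.length, moveWeight mz i

/-- The total displacement `D(π) = Σ_i |i - π(i)|` of a permutation. -/
def totalDisp {n : ℕ} (π : Equiv.Perm (Fin n)) : ℤ :=
  ∑ i : Fin n, |((π i : ℕ) : ℤ) - ((i : ℕ) : ℤ)|

/-- The word over {U,H,D} associated to a permutation. -/
def toPath {n : ℕ} (π : Equiv.Perm (Fin n)) : List Move :=
  (List.finRange n).map fun i : Fin n =>
    if (i : ℕ) < (π i : ℕ) ∧ (i : ℕ) < (π.symm i : ℕ) then U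
    else if (π i : ℕ) < (i : ℕ) ∧ (π.symm i : ℕ) < (i : ℕ) then D
    else H

/-- The last fall length: the length of the maximal suffix consisting of D moves. -/
def lastFall (mz : List Move) : ℕ :=
  (mz.reverse.takeWhile (fun m => decide (m = D))).length

/-- The maximum height of a path. -/
def maxHeight (mz : List Move) : ℕ :=
  (Finset.range (mz.length + 1)).sup fun i => (heightAt mz i).toNat

/-- `flatsAt mz k` is the number of H moves of `mz` made at height `k`. -/
def flatsAt (mz : List Move) (k : ℕ) : ℕ :=
  ((Finset.range mz.length).filter fun j => mz[j]? = some H ∧ heightAt mz j = (k : ℤ)).card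

/-- `peaksAt mz k` is the number of U moves of `mz` ending at height `k`. -/
def peaksAt (mz : List Move) (k : ℕ) : ℕ :=
  ((Finset.range mz.length).filter fun j => mz[j]? = some U ∧ heightAt mz (j + 1) = (k : ℤ)).card

/-- `downsAt mz k` is the number of D moves of `mz` starting at height `k`. -/
def downsAt (mz : List Move) (k : ℕ) : ℕ :=
  ((Finset.range mz.length).filter fun j => mz[j]? = some D ∧ heightAt mz j = (k : ℤ)).card

/-- A candidate building sequence `(f_0, p_1, f_1, …, p_h, f_h)`, recorded as its
height `h` together with the flat counts `f` and peak counts `p`. -/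
structure BSeq where
  h : ℕ
  f : ℕ → ℕ
  p : ℕ → ℕ

/-- `Sset n A` is the set of building sequences for width `n` and area `A`:
all `p`-entries `p_1, …, p_h` are positive, entries beyond the height are zero, and the
width and area conditions hold. -/
def Sset (n A : ℕ) : Set BSeq :=
  {a | (∀ i, 1 ≤ i → i ≤ a.h → 0 < a.p i) ∧
       a.p 0 = 0 ∧
       (∀ i, a.h < i → a.p i = 0) ∧
       (∀ i, a.h < i → a.f i = 0) ∧
       (∑ i ∈ Finset.range (a.h + 1), a.f i) + 2 * (∑ i ∈ Finset.Icc 1 a.h, a.p i) = n ∧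
       (∑ i ∈ Finset.range (a.h + 1), i * a.f i) +
         (∑ i ∈ Finset.Icc 1 a.h, (2 * i - 1) * a.p i) = A}

/-- `mz` has building sequence `a`. -/
def hasBuildSeq (mz : List Move) (a : BSeq) : Prop :=
  maxHeight mz = a.h ∧ (∀ i, flatsAt mz i = a.f i) ∧ (∀ i, peaksAt mz i = a.p i)

/-- `perm(a) = ∏_{i=0}^h (2i+1)^{f_i} · ∏_{i=1}^h i^{2p_i}`. -/
def permWeight (a : BSeq) : ℕ :=
  (∏ i ∈ Finset.range (a.h + 1), (2 * i + 1) ^ a.f i) *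
    ∏ i ∈ Finset.Icc 1 a.h, i ^ (2 * a.p i)

/-- `m(a)`, the number of Motzkin paths with building sequence `a`. -/
def mcount (a : BSeq) : ℕ :=
  Nat.choose (a.f a.h + a.p a.h - 1) (a.p a.h - 1) *
    (∏ i ∈ Finset.Icc 1 (a.h - 1),
      Nat.choose (a.p (i + 1) + a.f i) (a.f i) *
        Nat.choose (a.p (i + 1) + a.f i + a.p i - 1) (a.p i - 1)) *
    Nat.choose (a.p 1 + a.f 0) (a.f 0)

/-- `M(n,A,l)`: the number of Motzkin paths of width `n`, area `A` and last fall length `l`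
(for negative arguments there are no such paths, so the value is `0`; the value at
`(0,0,0)` is `1`, counting the empty path). -/
noncomputable def Mcount (n A l : ℤ) : ℕ :=
  Nat.card {mz : List Move // (mz.length : ℤ) = n ∧ IsMotzkin mz ∧ area mz = A ∧
    (lastFall mz : ℤ) = l}

/-- `D(n,d,l)`: the sum of the weights of all Motzkin paths of width `n`, area `d` and
last fall length `l`. -/
noncomputable def Dw (n d l : ℤ) : ℤ :=
  ∑ᶠ mz ∈ {mz : List Move | (mz.length : ℤ) = n ∧ IsMotzkin mz ∧ area mz = d ∧
    (lastFall mz : ℤ) = l}, weight mz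

/-- `M(n,A,h,p)`: the number of Motzkin paths of width `n`, area `A`, maximum height `h`,
with exactly `p` U-moves ending at height `h` and no H-moves at height `h`. -/
noncomputable def Mtop (n A h p : ℤ) : ℕ :=
  Nat.card {mz : List Move // (mz.length : ℤ) = n ∧ IsMotzkin mz ∧ area mz = A ∧
    (maxHeight mz : ℤ) = h ∧ (peaksAt mz h.toNat : ℤ) = p ∧ flatsAt mz h.toNat = 0}

/-- `D(n,d,h,p)`: the sum of weights of Motzkin paths of width `n`, area `d`,
maximum height `h`, with exactly `p` U-moves ending at height `h` and no H-moves at height `h`. -/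
noncomputable def Dtop (n d h p : ℤ) : ℤ :=
  ∑ᶠ mz ∈ {mz : List Move | (mz.length : ℤ) = n ∧ IsMotzkin mz ∧ area mz = d ∧
    (maxHeight mz : ℤ) = h ∧ (peaksAt mz h.toNat : ℤ) = p ∧ flatsAt mz h.toNat = 0}, weight mz

/-- The area under the first `i` moves of a path (trapezoid rule; may be a half-integer). -/
def prefixArea (mz : List Move) (i : ℕ) : ℚ :=
  ∑ j ∈ Finset.range i, ((heightAt mz j : ℚ) + (heightAt mz (j + 1) : ℚ)) / 2

/-!
A nonempty Motzkin path with last fall `l` is `v c Dˡ` with `c = H` or `c = U`. Deleting the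
`H` (which lies at height `l`) leaves `v Dˡ`, of width `n - 1` and area `A - l`; deleting the peak
`U D` (possible only when `l ≥ 1`) leaves `v Dˡ⁻¹`, of width `n - 2` and area `A - (2l - 1)`.
Both deletions are bijections onto the paths whose last fall is at least `l`, resp. `l - 1`,
because those are exactly the paths `w Dᵏ` (`k = l`, resp. `l - 1`), each with a unique `w`.
-/

instance : Fintype Move :=
  ⟨{U, H, D}, fun m => by cases m <;> simp⟩

lemma heightAt_of_length_le {u : List Move} {i : ℕ} (h : u.length ≤ i) :
    heightAt u i = heightAt u u.length := by
  rw [heightAt, heightAt, List.take_of_length_le h, List.take_length]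

lemma heightAt_append_of_le {xs : List Move} (ys : List Move) {i : ℕ} (h : i ≤ xs.length) :
    heightAt (xs ++ ys) i = heightAt xs i := by
  rw [heightAt, heightAt, List.take_append_of_le_length h]

lemma heightAt_append_length_add (xs ys : List Move) (j : ℕ) :
    heightAt (xs ++ ys) (xs.length + j) = heightAt xs xs.length + heightAt ys j := by
  simp [heightAt, List.take_append, List.take_of_length_le]

lemma heightAt_append_singleton (u : List Move) (c : Move) :
    heightAt (u ++ [c]) (u ++ [c]).length = heightAt u u.length + c.step := by
  simp [heightAt]

lemma heightAt_replicate_D (k j : ℕ) :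
    heightAt (List.replicate k D) j = -(min j k : ℕ) := by
  simp [heightAt, List.take_replicate, Move.step]

lemma area_append (xs ys : List Move) :
    area (xs ++ ys) = area xs + area ys + ys.length * heightAt xs xs.length := by
  have hsplit := Finset.sum_range_add (heightAt (xs ++ ys)) xs.length (ys.length + 1)
  have hxs := Finset.sum_range_succ (heightAt xs) xs.length
  simp only [area, List.length_append, ← add_assoc] at hsplit ⊢
  rw [hsplit, Finset.sum_congr rfl fun j _ => heightAt_append_length_add xs ys j,
    Finset.sum_congr rfl fun i hi => heightAt_append_of_le ys (Finset.mem_range.mp hi).le,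
    Finset.sum_add_distrib]
  simp only [Finset.sum_const, Finset.card_range, Int.nsmul_eq_mul, Nat.cast_add, Nat.cast_one]
  linarith

lemma area_singleton (c : Move) : area [c] = c.step := by
  simp [area, Finset.sum_range_succ, heightAt]

lemma area_replicate_D_succ (k : ℕ) :
    area (List.replicate (k + 1) D) = area (List.replicate k D) - (k + 1) := by
  rw [List.replicate_succ', area_append, area_singleton, heightAt_replicate_D]
  simp only [Move.step, List.length_cons, List.length_nil, List.length_replicate, min_self]
  push_cast
  ring

lemma area_append_H_replicate {u : List Move} {l : ℕ} (hu : heightAt u u.length = l) :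
    area (u ++ H :: List.replicate l D) = area (u ++ List.replicate l D) + l := by
  rw [← List.singleton_append, ← List.append_assoc, area_append, area_append, area_append,
    heightAt_append_singleton, hu, area_singleton]
  simp only [Move.step, List.length_cons, List.length_nil, List.length_replicate]
  push_cast
  ring

lemma area_append_U_replicate {u : List Move} {k : ℕ} (hu : heightAt u u.length = k) :
    area (u ++ U :: List.replicate (k + 1) D) = area (u ++ List.replicate k D) + (2 * k + 1) := by
  rw [← List.singleton_append, ← List.append_assoc, area_append, area_append, area_append,
    heightAt_append_singleton, hu, area_singleton, area_replicate_D_succ]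
  simp only [Move.step, List.length_cons, List.length_nil, List.length_replicate]
  push_cast
  ring

def IsMotzkinPrefix (u : List Move) : Prop :=
  ∀ i, 0 ≤ heightAt u i

lemma IsMotzkinPrefix.of_append {u v : List Move} (h : IsMotzkinPrefix (u ++ v)) :
    IsMotzkinPrefix u := by
  intro i
  rcases le_total i u.length with hi | hi
  · rw [← heightAt_append_of_le v hi]; exact h i
  · rw [heightAt_of_length_le hi, ← heightAt_append_of_le v le_rfl]; exact h _

lemma isMotzkinPrefix_append_singleton_iff {u : List Move} {c : Move} :
    IsMotzkinPrefix (u ++ [c]) ↔ IsMotzkinPrefix u ∧ 0 ≤ heightAt u u.length + c.step := by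
  refine ⟨fun h => ⟨h.of_append, heightAt_append_singleton u c ▸ h _⟩, fun ⟨hu, hc⟩ i => ?_⟩
  rcases le_total i u.length with hi | hi
  · rw [heightAt_append_of_le _ hi]; exact hu i
  · rcases hi.eq_or_lt with rfl | hi
    · rw [heightAt_append_of_le _ le_rfl]; exact hu _
    · rw [heightAt_of_length_le (by simpa using hi), heightAt_append_singleton]; exact hc

lemma isMotzkin_append_replicate_iff {u : List Move} {l : ℕ} :
    IsMotzkin (u ++ List.replicate l D) ↔ IsMotzkinPrefix u ∧ heightAt u u.length = l := by
  have hend : heightAt (u ++ List.replicate l D) (u ++ List.replicate l D).length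
      = heightAt u u.length - l := by
    simp [heightAt_append_length_add, heightAt_replicate_D, sub_eq_add_neg]
  refine ⟨fun ⟨hpos, hzero⟩ => ⟨IsMotzkinPrefix.of_append hpos, by linarith⟩,
    fun ⟨hu, hl⟩ => ⟨fun i => ?_, by rw [hend, hl, sub_self]⟩⟩
  rcases le_total i u.length with hi | hi
  · rw [heightAt_append_of_le _ hi]; exact hu i
  · obtain ⟨j, rfl⟩ := Nat.exists_eq_add_of_le hi
    rw [heightAt_append_length_add, heightAt_replicate_D, hl]
    have : min j l ≤ l := min_le_right j l
    omega

lemma isMotzkin_append_cons_replicate_iff {u : List Move} {c : Move} {l : ℕ} :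
    IsMotzkin (u ++ c :: List.replicate l D) ↔
      IsMotzkinPrefix u ∧ heightAt u u.length + c.step = l := by
  rw [← List.singleton_append, ← List.append_assoc, isMotzkin_append_replicate_iff,
    isMotzkinPrefix_append_singleton_iff, heightAt_append_singleton]
  constructor
  · rintro ⟨⟨hu, -⟩, hl⟩; exact ⟨hu, hl⟩
  · rintro ⟨hu, hl⟩; exact ⟨⟨hu, hl ▸ Nat.cast_nonneg l⟩, hl⟩

lemma lastFall_append_replicate (u : List Move) (k : ℕ) :
    lastFall (u ++ List.replicate k D) = lastFall u + k := by
  simp [lastFall, List.takeWhile_append_of_pos, add_comm]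

lemma lastFall_append_singleton_of_ne {u : List Move} {c : Move} (hc : c ≠ D) :
    lastFall (u ++ [c]) = 0 := by
  simp [lastFall, hc]

lemma lastFall_append_cons_replicate {u : List Move} {c : Move} (hc : c ≠ D) (l : ℕ) :
    lastFall (u ++ c :: List.replicate l D) = l := by
  rw [← List.singleton_append, ← List.append_assoc, lastFall_append_replicate,
    lastFall_append_singleton_of_ne hc, zero_add]

lemma exists_eq_append_replicate_lastFall (mz : List Move) :
    ∃ v, mz = v ++ List.replicate (lastFall mz) D := by
  induction mz using List.reverseRecOn with
  | nil => exact ⟨[], rfl⟩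
  | append_singleton mz c ih =>
    by_cases hc : c = D
    · obtain ⟨v, hv⟩ := ih
      subst hc
      refine ⟨v, ?_⟩
      rw [← List.replicate_one, lastFall_append_replicate, List.replicate_one,
        List.replicate_succ', hv, List.append_assoc, ← hv]
    · exact ⟨mz ++ [c], by rw [lastFall_append_singleton_of_ne hc, List.replicate_zero,
        List.append_nil]⟩

lemma le_lastFall_iff {mz : List Move} {l : ℕ} :
    l ≤ lastFall mz ↔ mz ∈ Set.range (· ++ List.replicate l D) := by
  refine ⟨fun h => ?_, ?_⟩
  · obtain ⟨v, hv⟩ := exists_eq_append_replicate_lastFall mz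
    refine ⟨v ++ List.replicate (lastFall mz - l) D, ?_⟩
    dsimp only
    rw [List.append_assoc, ← List.replicate_add, Nat.sub_add_cancel h, ← hv]
  · rintro ⟨v, rfl⟩
    rw [lastFall_append_replicate]
    exact Nat.le_add_left l _

lemma eq_replicate_or_exists_of_lastFall_eq {mz : List Move} {l : ℕ} (h : lastFall mz = l) :
    mz = List.replicate l D ∨ ∃ v c, c ≠ D ∧ mz = v ++ c :: List.replicate l D := by
  obtain ⟨w, hw⟩ := exists_eq_append_replicate_lastFall mz
  have hw0 : lastFall w = 0 := by
    have := congrArg lastFall hw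
    rw [lastFall_append_replicate] at this
    omega
  rw [h] at hw
  rcases List.eq_nil_or_concat w with rfl | ⟨v, c, rfl⟩
  · exact Or.inl hw
  rw [List.concat_eq_append] at hw hw0
  refine Or.inr ⟨v, c, fun hc => ?_, by simpa using hw⟩
  subst hc
  rw [← List.replicate_one, lastFall_append_replicate] at hw0
  omega

lemma ncard_eq_finsum_ncard_fiber {α β : Type*} {s : Set α} (hs : s.Finite) (g : α → β) :
    s.ncard = ∑ᶠ b, {x ∈ s | g x = b}.ncard := by
  classical
  have hsupp : (Function.support fun b => {x ∈ s | g x = b}.ncard) ⊆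
      ↑(hs.toFinset.image g) := by
    intro b hb
    obtain ⟨x, hx, rfl⟩ := Set.nonempty_of_ncard_ne_zero hb
    simpa using ⟨x, hx, rfl⟩
  rw [finsum_eq_sum_of_support_subset _ hsupp, Set.ncard_eq_toFinset_card _ hs,
    Finset.card_eq_sum_card_image g]
  refine Finset.sum_congr rfl fun b _ => ?_
  rw [Set.ncard_eq_toFinset_card _ (hs.subset (Set.sep_subset _ _))]
  congr 1
  ext x
  simp

lemma ncard_inter_range_of_injective {α β : Type*} {f : α → β} (hf : f.Injective) (s : Set β) :
    (s ∩ Set.range f).ncard = (f ⁻¹' s).ncard := by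
  rw [← Set.preimage_inter_range,
    Set.ncard_preimage_of_injective_subset_range hf Set.inter_subset_right]

def motzkinSet (n A : ℤ) : Set (List Move) :=
  {mz | (mz.length : ℤ) = n ∧ IsMotzkin mz ∧ area mz = A}

lemma motzkinSet_finite (n A : ℤ) : (motzkinSet n A).Finite :=
  (List.finite_length_le Move n.toNat).subset fun mz h => by
    simp only [motzkinSet, Set.mem_ofPred_eq] at h ⊢
    omega

lemma Mcount_eq_ncard (n A l : ℤ) :
    Mcount n A l = {mz ∈ motzkinSet n A | (lastFall mz : ℤ) = l}.ncard := by
  rw [Mcount, ← Nat.card_coe_set_eq]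
  simp only [motzkinSet, Set.mem_ofPred_eq, and_assoc]
  rfl

lemma finsum_Mcount_ge_eq_ncard (m a : ℤ) (l : ℕ) :
    ∑ᶠ l' ∈ {l' : ℤ | l ≤ l'}, Mcount m a l' =
      ((· ++ List.replicate l D) ⁻¹' motzkinSet m a).ncard := by
  have hrange : motzkinSet m a ∩ Set.range (· ++ List.replicate l D) =
      {mz ∈ motzkinSet m a | l ≤ lastFall mz} := by
    ext mz
    rw [Set.mem_inter_iff, ← le_lastFall_iff]
    rfl
  rw [← ncard_inter_range_of_injective (List.append_left_injective _), hrange,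
    ncard_eq_finsum_ncard_fiber ((motzkinSet_finite m a).subset (Set.sep_subset _ _))
      (fun mz => (lastFall mz : ℤ)), finsum_mem_def]
  refine finsum_congr fun l' => ?_
  by_cases hl' : l' ∈ {l' : ℤ | l ≤ l'}
  · rw [Set.indicator_of_mem hl', Mcount_eq_ncard]
    congr 1
    ext mz
    simp only [Set.mem_ofPred_eq]
    constructor
    · rintro ⟨hmz, rfl⟩
      exact ⟨⟨hmz, Int.ofNat_le.mp hl'⟩, rfl⟩
    · rintro ⟨⟨hmz, -⟩, rfl⟩
      exact ⟨hmz, rfl⟩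
  · rw [Set.indicator_of_notMem hl']
    symm
    convert Set.ncard_empty (List Move)
    refine Set.eq_empty_iff_forall_notMem.mpr ?_
    rintro mz ⟨⟨-, hle⟩, rfl⟩
    exact hl' (show (l : ℤ) ≤ lastFall mz by exact_mod_cast hle)

lemma preimage_append_H_replicate (n A : ℤ) (l : ℕ) :
    (· ++ H :: List.replicate l D) ⁻¹' motzkinSet n A =
      (· ++ List.replicate l D) ⁻¹' motzkinSet (n - 1) (A - l) := by
  ext v
  simp only [Set.mem_preimage, motzkinSet, Set.mem_ofPred_eq, List.length_append,
    List.length_cons, List.length_replicate, isMotzkin_append_cons_replicate_iff,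
    isMotzkin_append_replicate_iff, Move.step, add_zero]
  constructor
  · rintro ⟨hlen, hm, harea⟩
    exact ⟨by omega, hm, by rw [← harea, area_append_H_replicate hm.2]; ring⟩
  · rintro ⟨hlen, hm, harea⟩
    exact ⟨by omega, hm, by rw [area_append_H_replicate hm.2, harea]; ring⟩

lemma preimage_append_U_replicate_succ (n A : ℤ) (k : ℕ) :
    (· ++ U :: List.replicate (k + 1) D) ⁻¹' motzkinSet n A =
      (· ++ List.replicate k D) ⁻¹' motzkinSet (n - 2) (A - (2 * k + 1)) := by
  ext v
  simp only [Set.mem_preimage, motzkinSet, Set.mem_ofPred_eq, List.length_append,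
    List.length_cons, List.length_replicate, isMotzkin_append_cons_replicate_iff,
    isMotzkin_append_replicate_iff, Move.step, Nat.cast_add, Nat.cast_one, add_left_inj]
  constructor
  · rintro ⟨hlen, hm, harea⟩
    exact ⟨by omega, hm, by rw [← harea, area_append_U_replicate hm.2]; ring⟩
  · rintro ⟨hlen, hm, harea⟩
    exact ⟨by omega, hm, by rw [area_append_U_replicate hm.2, harea]; ring⟩

lemma preimage_append_U_eq_empty (n A : ℤ) :
    (· ++ [U]) ⁻¹' motzkinSet n A = ∅ := by
  refine Set.eq_empty_iff_forall_notMem.mpr fun v ⟨_, hm, _⟩ => ?_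
  obtain ⟨hv, hend⟩ := isMotzkin_append_cons_replicate_iff.mp
    (show IsMotzkin (v ++ U :: List.replicate 0 D) from hm)
  have := hv v.length
  simp only [Move.step, Nat.cast_zero] at hend
  omega

lemma setOf_lastFall_eq {n : ℤ} (hn : 1 ≤ n) (A : ℤ) (l : ℕ) :
    {mz ∈ motzkinSet n A | lastFall mz = l} =
      motzkinSet n A ∩ Set.range (· ++ H :: List.replicate l D) ∪
        motzkinSet n A ∩ Set.range (· ++ U :: List.replicate l D) := by
  ext mz
  simp only [Set.mem_ofPred_eq, Set.mem_union, Set.mem_inter_iff, ← and_or_left]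
  refine and_congr_right fun hmz => ⟨fun h => ?_, ?_⟩
  · rcases eq_replicate_or_exists_of_lastFall_eq h with rfl | ⟨v, c, hc, rfl⟩
    · obtain ⟨hlen, hm, -⟩ := hmz
      have hl : (0 : ℤ) = l := ((isMotzkin_append_replicate_iff (u := [])).mp hm).2
      simp only [List.length_replicate] at hlen
      omega
    · cases c
      · exact Or.inr ⟨v, rfl⟩
      · exact Or.inl ⟨v, rfl⟩
      · exact absurd rfl hc
  · rintro (⟨v, rfl⟩ | ⟨v, rfl⟩) <;> exact lastFall_append_cons_replicate (by simp) l

lemma disjoint_range_append_cons (t : List Move) {c c' : Move} (h : c ≠ c') :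
    Disjoint (Set.range (· ++ c :: t)) (Set.range (· ++ c' :: t)) := by
  rw [Set.disjoint_left]
  rintro _ ⟨v, rfl⟩ ⟨w, hw⟩
  exact h (List.cons.inj (List.append_inj' hw rfl).2).1.symm

lemma ncard_setOf_lastFall_eq {n : ℤ} (hn : 1 ≤ n) (A : ℤ) (l : ℕ) :
    {mz ∈ motzkinSet n A | lastFall mz = l}.ncard =
      ((· ++ H :: List.replicate l D) ⁻¹' motzkinSet n A).ncard +
        ((· ++ U :: List.replicate l D) ⁻¹' motzkinSet n A).ncard := by
  rw [setOf_lastFall_eq hn, Set.ncard_union_eq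
      ((disjoint_range_append_cons _ (by decide)).mono Set.inter_subset_right
        Set.inter_subset_right)
      ((motzkinSet_finite n A).inter_of_left _) ((motzkinSet_finite n A).inter_of_left _),
    ncard_inter_range_of_injective (List.append_left_injective _),
    ncard_inter_range_of_injective (List.append_left_injective _)]

theorem motzkin_last_fall_recurrence_general (n A l : ℤ) (hn : 1 ≤ n) (hl : 0 ≤ l) :
    Mcount n A l =
      (∑ᶠ l' ∈ {l' : ℤ | l ≤ l'}, Mcount (n - 1) (A - l) l') +
      (if l = 0 then 0
       else ∑ᶠ l' ∈ {l' : ℤ | l - 1 ≤ l'}, Mcount (n - 2) (A - (2 * l - 1)) l') := by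
  lift l to ℕ using hl
  rw [Mcount_eq_ncard]
  simp only [Nat.cast_inj]
  rw [ncard_setOf_lastFall_eq hn, preimage_append_H_replicate, ← finsum_Mcount_ge_eq_ncard]
  cases l with
  | zero => simp [preimage_append_U_eq_empty]
  | succ k =>
    have hfall : ((k + 1 : ℕ) : ℤ) - 1 = k := by push_cast; ring
    have harea : A - (2 * ((k + 1 : ℕ) : ℤ) - 1) = A - (2 * k + 1) := by push_cast; ring
    rw [preimage_append_U_replicate_succ, ← finsum_Mcount_ge_eq_ncard, if_neg (by omega), hfall,
      harea]

/-- the last-fall recurrence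
`M(n,A,l) = Σ_{l' ≥ l} M(n-1, A-l, l') + Σ_{l' ≥ l-1} M(n-2, A-(2l-1), l')`,
where the second sum is absent (zero) when `l = 0`. -/
theorem motzkin_last_fall_recurrence (n A l : ℤ) (hn : 1 ≤ n) (hA : 0 ≤ A) (hl : 0 ≤ l) :
    Mcount n A l =
      (∑ᶠ l' ∈ {l' : ℤ | l ≤ l'}, Mcount (n - 1) (A - l) l') +
      (if l = 0 then 0
       else ∑ᶠ l' ∈ {l' : ℤ | l - 1 ≤ l'}, Mcount (n - 2) (A - (2 * l - 1)) l') :=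
  motzkin_last_fall_recurrence_general n A l hn hl
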